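/- Let Z = λ₂ y s̃(x,y) ∂y with λ₂ ≠ 0 and s̃(0,0) = 1 holomorphic, and suppose Y is a meromorphic vector field with Y ⋔ Z and [Z,Y] = δY, where Z(x,y) = λ₂y(1+μx^k)∂y. Writing Y = AZ + B∂x with meromorphic A, B and B ≠ 0, the relation [Z,Y]=δY is equivalent to the system Z·A = δA + (kμx^{k−1}/(1+μx^k))B and Z·B = δB. If δ ≠ 0, then μ = 0, δ = mλ₂ with m ∈ ℤ, and Y = y^m (a(x)Z + b(x)∂x) for germs a, b ∈ ℂ{(x)}, b ≠ 0. -/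

import Mathlib

/- Statement 14 (from Corollary non-isolated): Z = λ₂y(1+μx^k)∂y (λ₂ ≠ 0), Y = A·Z + B·∂x
a meromorphic vector field with B ≠ 0 and [Z,Y] = δY, i.e. (system, denominators cleared)
  Z·A = δA + (kμx^{k−1}/(1+μx^k))·B  and  Z·B = δB.
If δ ≠ 0 then μ = 0, m := δ/λ₂ ∈ ℤ, and Y = y^m (a(x)·Z + b(x)·∂x) with a, b germs of
meromorphic functions of x alone, b ≠ 0.
Encoding: germs are (formal) power series in ℂ[[x,y]]; the meromorphic coefficients A, B
of Y are represented as A/s, B/s with s ≠ 0; "a(x) meromorphic in x" is a quotient of two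
series in x only; y^m with m ∈ ℤ is encoded by multiplying either side by y^{m⁺}, y^{m⁻}. -/

noncomputable section
open MvPowerSeries

abbrev R2 := MvPowerSeries (Fin 2) ℂ

def pd (i : Fin 2) (f : R2) : R2 :=
  fun d => ((d i : ℂ) + 1) * MvPowerSeries.coeff (R := ℂ) (d + Finsupp.single i 1) f

/-- Z·f for Z = λ₂ y (1 + μ x^k) ∂y. -/
def zD (lam₂ μ : ℂ) (k : ℕ) (f : R2) : R2 :=
  MvPowerSeries.C (σ := Fin 2) (R := ℂ) lam₂ * MvPowerSeries.X 1 *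
    (1 + MvPowerSeries.C (σ := Fin 2) (R := ℂ) μ * MvPowerSeries.X 0 ^ k) * pd 1 f

/-- a power series involving only the variable x -/
def OnlyX (f : R2) : Prop :=
  ∀ d : Fin 2 →₀ ℕ, d 1 ≠ 0 → MvPowerSeries.coeff (R := ℂ) d f = 0

namespace Stmt14Aux

abbrev K := PowerSeries ℂ

def fd (i n : ℕ) : Fin 2 →₀ ℕ := Finsupp.single 0 i + Finsupp.single 1 n

@[simp] lemma fd_apply0 (i n : ℕ) : fd i n 0 = i := by simp [fd]
@[simp] lemma fd_apply1 (i n : ℕ) : fd i n 1 = n := by simp [fd]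

lemma fd_eta (d : Fin 2 →₀ ℕ) : fd (d 0) (d 1) = d := by
  ext j
  fin_cases j <;> simp [fd]

lemma fd_add (i n j m : ℕ) : fd i n + fd j m = fd (i + j) (n + m) := by
  ext l; fin_cases l <;> simp [fd]

lemma fd_inj {i n j m : ℕ} (h : fd i n = fd j m) : i = j ∧ n = m := by
  constructor
  · have := congrArg (fun d : Fin 2 →₀ ℕ => d 0) h; simpa using this
  · have := congrArg (fun d : Fin 2 →₀ ℕ => d 1) h; simpa using this

lemma fd_eq_iff {i n j m : ℕ} : fd i n = fd j m ↔ i = j ∧ n = m :=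
  ⟨fd_inj, by rintro ⟨rfl, rfl⟩; rfl⟩

@[simp] lemma fd_zero : fd 0 0 = 0 := by ext l; fin_cases l <;> simp [fd]

def Φfun (f : R2) : PowerSeries K :=
  PowerSeries.mk fun n => PowerSeries.mk fun i => MvPowerSeries.coeff (R := ℂ) (fd i n) f

lemma coeff_Φfun (f : R2) (n i : ℕ) :
    PowerSeries.coeff (R := ℂ) i (PowerSeries.coeff (R := K) n (Φfun f)) = MvPowerSeries.coeff (R := ℂ) (fd i n) f := by
  simp [Φfun]

lemma Φfun_mul (f g : R2) : Φfun (f * g) = Φfun f * Φfun g := by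
  ext n i
  rw [coeff_Φfun, MvPowerSeries.coeff_mul, PowerSeries.coeff_mul, map_sum]
  have : ∀ p ∈ Finset.HasAntidiagonal.antidiagonal n,
      PowerSeries.coeff (R := ℂ) i (PowerSeries.coeff (R := K) p.1 (Φfun f) * PowerSeries.coeff (R := K) p.2 (Φfun g))
      = ∑ q ∈ Finset.HasAntidiagonal.antidiagonal i,
          MvPowerSeries.coeff (R := ℂ) (fd q.1 p.1) f * MvPowerSeries.coeff (R := ℂ) (fd q.2 p.2) g := by
    intro p _
    rw [PowerSeries.coeff_mul]
    exact Finset.sum_congr rfl fun q _ => by rw [coeff_Φfun, coeff_Φfun]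
  rw [Finset.sum_congr rfl this, ← Finset.sum_product']
  refine Finset.sum_nbij' (i := fun dd => ((dd.1 1, dd.2 1), (dd.1 0, dd.2 0)))
    (j := fun pq => (fd pq.2.1 pq.1.1, fd pq.2.2 pq.1.2)) ?_ ?_ ?_ ?_ ?_
  · rintro ⟨d1, d2⟩ h
    rw [Finset.HasAntidiagonal.mem_antidiagonal] at h
    simp only [Finset.mem_product, Finset.HasAntidiagonal.mem_antidiagonal]
    constructor
    · have := congrArg (fun d : Fin 2 →₀ ℕ => d 1) h; simpa [fd] using this
    · have := congrArg (fun d : Fin 2 →₀ ℕ => d 0) h; simpa [fd] using this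
  · rintro ⟨⟨b, d⟩, ⟨a, c⟩⟩ h
    simp only [Finset.mem_product, Finset.HasAntidiagonal.mem_antidiagonal] at h
    rw [Finset.HasAntidiagonal.mem_antidiagonal, fd_add, h.1, h.2]
  · rintro ⟨d1, d2⟩ _
    simp only [Prod.mk.injEq]
    exact ⟨fd_eta d1, fd_eta d2⟩
  · rintro ⟨⟨b, d⟩, ⟨a, c⟩⟩ _; simp
  · rintro ⟨d1, d2⟩ _; simp [fd_eta]

def Φ : R2 →+* PowerSeries K where
  toFun := Φfun
  map_one' := by
    ext n i
    rw [coeff_Φfun]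
    rw [MvPowerSeries.coeff_one]
    by_cases hn : n = 0
    · subst hn
      by_cases hi : i = 0 <;>
        simp [hi, PowerSeries.coeff_one, show fd i 0 = 0 ↔ i = 0 ∧ (0:ℕ) = 0 from by
          rw [← fd_zero, fd_eq_iff]]
    · have : fd i n ≠ 0 := by rw [← fd_zero, Ne, fd_eq_iff]; tauto
      simp [this, PowerSeries.coeff_one, hn]
  map_mul' := Φfun_mul
  map_zero' := by
    ext n i; rw [coeff_Φfun]; simp
  map_add' f g := by
    ext n i
    simp only [map_add, PowerSeries.coeff_mk]
    rw [coeff_Φfun, coeff_Φfun, coeff_Φfun, map_add]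

lemma coeff_Φ (f : R2) (n i : ℕ) :
    PowerSeries.coeff (R := ℂ) i (PowerSeries.coeff (R := K) n (Φ f)) = MvPowerSeries.coeff (R := ℂ) (fd i n) f :=
  coeff_Φfun f n i

lemma Φ_inj : Function.Injective Φ := by
  intro f g h
  ext d
  have := congrArg (fun F => PowerSeries.coeff (R := ℂ) (d 0) (PowerSeries.coeff (R := K) (d 1) F)) h
  simpa [coeff_Φ, fd_eta] using this


lemma Φ_C (c : ℂ) : Φ (MvPowerSeries.C (σ := Fin 2) (R := ℂ) c) = PowerSeries.C (R := K) (PowerSeries.C (R := ℂ) c) := by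
  ext n i
  rw [show ((Φ (MvPowerSeries.C (σ := Fin 2) (R := ℂ) c)) : PowerSeries K) = Φfun (MvPowerSeries.C (σ := Fin 2) (R := ℂ) c) from rfl,
    coeff_Φfun, MvPowerSeries.coeff_C]
  by_cases hn : n = 0
  · subst hn
    by_cases hi : i = 0 <;>
      simp [hi, PowerSeries.coeff_C, show fd i 0 = 0 ↔ i = 0 ∧ (0:ℕ) = 0 from by
        rw [← fd_zero, fd_eq_iff]]
  · have : fd i n ≠ 0 := by rw [← fd_zero, Ne, fd_eq_iff]; tauto
    simp [this, PowerSeries.coeff_C, hn]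

lemma Φ_X1 : Φ (MvPowerSeries.X (R := ℂ) 1) = (PowerSeries.X : PowerSeries K) := by
  ext n i
  rw [show ((Φ (MvPowerSeries.X (R := ℂ) 1)) : PowerSeries K) = Φfun (MvPowerSeries.X 1) from rfl,
    coeff_Φfun, MvPowerSeries.coeff_X]
  have h01 : Finsupp.single (1 : Fin 2) 1 = fd 0 1 := by simp [fd]
  rw [h01]
  by_cases hn : n = 1
  · subst hn
    by_cases hi : i = 0 <;> simp [fd_eq_iff, hi, PowerSeries.coeff_X, PowerSeries.coeff_one]
  · simp [fd_eq_iff, hn, PowerSeries.coeff_X]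

lemma Φ_X0 : Φ (MvPowerSeries.X (R := ℂ) 0) = PowerSeries.C (R := K) (PowerSeries.X) := by
  ext n i
  rw [show ((Φ (MvPowerSeries.X (R := ℂ) 0)) : PowerSeries K) = Φfun (MvPowerSeries.X 0) from rfl,
    coeff_Φfun, MvPowerSeries.coeff_X]
  have h01 : Finsupp.single (0 : Fin 2) 1 = fd 1 0 := by simp [fd]
  rw [h01]
  by_cases hn : n = 0
  · subst hn
    by_cases hi : i = 1 <;> simp [fd_eq_iff, hi, PowerSeries.coeff_C, PowerSeries.coeff_X]
  · simp [fd_eq_iff, hn, PowerSeries.coeff_C, PowerSeries.coeff_X, fun h : n = 0 => hn h]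

lemma Φ_pd1 (f : R2) : Φ (pd 1 f) = PowerSeries.derivative K (Φ f) := by
  ext n i
  rw [show ((Φ (pd 1 f)) : PowerSeries K) = Φfun (pd 1 f) from rfl, coeff_Φfun]
  rw [PowerSeries.coeff_derivative]
  have hc : ((n : K) + 1) = PowerSeries.C (R := ℂ) ((n : ℂ) + 1) := by
    rw [map_add, map_one, map_natCast]
  rw [hc, PowerSeries.coeff_mul_C]
  have h1 : MvPowerSeries.coeff (R := ℂ) (fd i n) (pd 1 f)
      = ((n : ℂ) + 1) * MvPowerSeries.coeff (R := ℂ) (fd i (n+1)) f := by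
    rw [MvPowerSeries.coeff_apply]
    show ((fd i n 1 : ℂ) + 1) * MvPowerSeries.coeff (R := ℂ) (fd i n + Finsupp.single 1 1) f = _
    have h2 : fd i n + Finsupp.single 1 1 = fd i (n + 1) := by
      have h3 : Finsupp.single (1 : Fin 2) 1 = fd 0 1 := by simp [fd]
      rw [h3, fd_add, Nat.add_zero]
    rw [h2, fd_apply1]
  rw [h1, coeff_Φ]
  ring

def emb (w : K) : R2 := fun d => if d 1 = 0 then PowerSeries.coeff (R := ℂ) (d 0) w else 0

lemma coeff_emb (w : K) (d : Fin 2 →₀ ℕ) :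
    MvPowerSeries.coeff (R := ℂ) d (emb w) = if d 1 = 0 then PowerSeries.coeff (R := ℂ) (d 0) w else 0 := rfl

lemma onlyX_emb (w : K) : OnlyX (emb w) := by
  intro d hd
  rw [coeff_emb, if_neg hd]

lemma Φ_emb (w : K) : Φ (emb w) = PowerSeries.C (R := K) w := by
  ext n i
  rw [show ((Φ (emb w)) : PowerSeries K) = Φfun (emb w) from rfl, coeff_Φfun, coeff_emb]
  by_cases hn : n = 0 <;> simp [hn, PowerSeries.coeff_C]

lemma emb_ne_zero {w : K} (hw : w ≠ 0) : emb w ≠ 0 := by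
  intro h
  apply hw
  have h2 := congrArg Φ h
  rw [Φ_emb, map_zero] at h2
  simpa using congrArg (PowerSeries.constantCoeff (R := K)) h2


section OneVar

open PowerSeries

instance : CharZero K := ⟨fun a b h => by
  have := congrArg (PowerSeries.constantCoeff (R := ℂ)) h
  simpa using this⟩

lemma Dmul {R : Type*} [CommRing R] (f g : PowerSeries R) :
    PowerSeries.derivative R (f * g)
      = f * PowerSeries.derivative R g + g * PowerSeries.derivative R f := by
  have h := PowerSeries.derivativeFun_mul f g
  have h1 : PowerSeries.derivative R (f * g) = PowerSeries.derivativeFun (f * g) := rfl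
  have h2 : PowerSeries.derivative R g = PowerSeries.derivativeFun g := rfl
  have h3 : PowerSeries.derivative R f = PowerSeries.derivativeFun f := rfl
  rw [h1, h2, h3, h]
  simp [smul_eq_mul]

lemma ordfact {φ : PowerSeries K} (hφ : φ ≠ 0) :
    ∃ (n : ℕ) (ψ : PowerSeries K), PowerSeries.constantCoeff (R := K) ψ ≠ 0 ∧
      φ = PowerSeries.X ^ n * ψ := by
  refine ⟨φ.order.toNat, PowerSeries.divXPowOrder φ, ?_,
    PowerSeries.X_pow_order_mul_divXPowOrder.symm⟩
  rw [Ne, PowerSeries.constantCoeff_divXPowOrder_eq_zero_iff]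
  exact hφ

lemma EXpow (n : ℕ) (ψ : PowerSeries K) :
    PowerSeries.X * (PowerSeries.derivative K (PowerSeries.X ^ n * ψ))
      = PowerSeries.C (R := K) ((n : K)) * (PowerSeries.X ^ n * ψ)
        + PowerSeries.X ^ n * (PowerSeries.X * PowerSeries.derivative K ψ) := by
  induction n with
  | zero => simp
  | succ n ih =>
    have hstep : (PowerSeries.X : PowerSeries K) ^ (n+1) * ψ
        = PowerSeries.X * (PowerSeries.X ^ n * ψ) := by ring
    rw [hstep, Dmul, PowerSeries.derivative_X]
    have hcast : (((n:ℕ)+1 : ℕ) : K) = ((n : K) + 1) := by push_cast; ring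
    rw [hcast, map_add, map_one]
    calc PowerSeries.X * (PowerSeries.X * PowerSeries.derivative K (PowerSeries.X ^ n * ψ)
            + PowerSeries.X ^ n * ψ * 1)
        = PowerSeries.X * (PowerSeries.X * (PowerSeries.derivative K (PowerSeries.X ^ n * ψ)))
            + PowerSeries.X ^ (n+1) * ψ := by ring
      _ = PowerSeries.X * (PowerSeries.C (R := K) ((n : K)) * (PowerSeries.X ^ n * ψ)
            + PowerSeries.X ^ n * (PowerSeries.X * PowerSeries.derivative K ψ))
            + PowerSeries.X ^ (n+1) * ψ := by rw [ih]
      _ = _ := by ring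

lemma core (u δ' : K) (p q : ℕ) (S₁ F₁ : PowerSeries K)
    (hs₀ : PowerSeries.constantCoeff (R := K) S₁ ≠ 0) (hf₀ : PowerSeries.constantCoeff (R := K) F₁ ≠ 0)
    (heq : PowerSeries.C (R := K) u *
        ((PowerSeries.X ^ p * S₁) * (PowerSeries.X * PowerSeries.derivative K (PowerSeries.X ^ q * F₁))
          - (PowerSeries.X ^ q * F₁) * (PowerSeries.X * PowerSeries.derivative K (PowerSeries.X ^ p * S₁)))
        = PowerSeries.C (R := K) δ' * (PowerSeries.X ^ q * F₁) * (PowerSeries.X ^ p * S₁)) :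
    u * ((q : K) - (p : K)) = δ' ∧
    PowerSeries.C (R := K) u * (S₁ * (PowerSeries.X * PowerSeries.derivative K F₁)
      - F₁ * (PowerSeries.X * PowerSeries.derivative K S₁)) = 0 := by
  have e1 := EXpow q F₁
  have e2 := EXpow p S₁
  have h2 : (PowerSeries.X : PowerSeries K) ^ (p + q) *
      (PowerSeries.C (R := K) u * ((PowerSeries.C (R := K) ((q:K)) - PowerSeries.C (R := K) ((p:K))) * (S₁ * F₁)
        + S₁ * (PowerSeries.X * PowerSeries.derivative K F₁)
        - F₁ * (PowerSeries.X * PowerSeries.derivative K S₁)))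
      = PowerSeries.X ^ (p + q) * (PowerSeries.C (R := K) δ' * F₁ * S₁) := by
    linear_combination heq - PowerSeries.C (R := K) u * (PowerSeries.X ^ p * S₁) * e1
      + PowerSeries.C (R := K) u * (PowerSeries.X ^ q * F₁) * e2
  have h3 := mul_left_cancel₀ (pow_ne_zero (p+q) (PowerSeries.X_ne_zero (R := K))) h2
  have h4 := congrArg (PowerSeries.constantCoeff (R := K)) h3
  simp only [map_mul, map_sub, map_add, PowerSeries.constantCoeff_C,
    PowerSeries.constantCoeff_X, zero_mul, mul_zero, sub_zero, add_zero] at h4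
  have h5 : (u * ((q:K) - (p:K)) - δ') *
      (PowerSeries.constantCoeff (R := K) S₁ * PowerSeries.constantCoeff (R := K) F₁) = 0 := by
    linear_combination h4
  have h6 : u * ((q:K) - (p:K)) - δ' = 0 := by
    rcases mul_eq_zero.mp h5 with h | h
    · exact h
    · exact absurd h (mul_ne_zero hs₀ hf₀)
  have h7 : u * ((q:K) - (p:K)) = δ' := by linear_combination h6
  refine ⟨h7, ?_⟩
  have h8 : PowerSeries.C (R := K) u * (PowerSeries.C (R := K) ((q:K)) - PowerSeries.C (R := K) ((p:K)))
      = PowerSeries.C (R := K) δ' := by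
    rw [← map_sub, ← map_mul, h7]
  linear_combination h3 - S₁ * F₁ * h8

lemma coeff_map' (f : PowerSeries K) (n : ℕ) :
    PowerSeries.coeff (R := (FractionRing K)) n (PowerSeries.map (algebraMap K (FractionRing K)) f)
      = algebraMap K (FractionRing K) (PowerSeries.coeff (R := K) n f) :=
  PowerSeries.coeff_map _ _ _

lemma prop_field {L : Type} [Field L] [CharZero L] (S F : PowerSeries L)
    (hs₀ : PowerSeries.constantCoeff (R := L) S ≠ 0)
    (heq : S * PowerSeries.derivative L F = F * PowerSeries.derivative L S) :
    ∃ c : L, F = PowerSeries.C (R := L) c * S := by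
  have hSne : S ≠ 0 := by intro h; apply hs₀; rw [h, map_zero]
  have hinv : S * S⁻¹ = 1 := PowerSeries.mul_inv_cancel _ hs₀
  have hFQ : F = F * S⁻¹ * S := by
    calc F = F * (S * S⁻¹) := by rw [hinv, mul_one]
      _ = F * S⁻¹ * S := by ring
  set Q := F * S⁻¹ with hQdef
  have hDF : PowerSeries.derivative L F
      = Q * PowerSeries.derivative L S + S * PowerSeries.derivative L Q := by
    conv_lhs => rw [hFQ]
    rw [Dmul]
  have hQ' : S * (S * PowerSeries.derivative L Q) = 0 := by
    rw [hDF] at heq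
    conv_rhs at heq => rw [hFQ]
    linear_combination heq
  have hDQ : PowerSeries.derivative L Q = 0 := by
    rcases mul_eq_zero.mp hQ' with h | h
    · exact absurd h hSne
    rcases mul_eq_zero.mp h with h' | h'
    · exact absurd h' hSne
    · exact h'
  refine ⟨PowerSeries.constantCoeff (R := L) Q, ?_⟩
  have hQC : Q = PowerSeries.C (R := L) (PowerSeries.constantCoeff (R := L) Q) := by
    ext n
    cases n with
    | zero =>
      rw [PowerSeries.coeff_zero_eq_constantCoeff_apply,
        PowerSeries.coeff_zero_eq_constantCoeff_apply, PowerSeries.constantCoeff_C]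
    | succ n =>
      have hd := congrArg (PowerSeries.coeff (R := L) n) hDQ
      rw [PowerSeries.coeff_derivative] at hd
      simp only [map_zero] at hd
      have hne : ((n : L) + 1) ≠ 0 := Nat.cast_add_one_ne_zero n
      have h0 : PowerSeries.coeff (R := L) (n+1) Q = 0 := by
        rcases mul_eq_zero.mp hd with h | h
        · exact h
        · exact absurd h hne
      rw [h0, PowerSeries.coeff_C]
      simp
  conv_lhs => rw [hFQ, hQC]

lemma prop (S₁ F₁ : PowerSeries K) (hs₀ : PowerSeries.constantCoeff (R := K) S₁ ≠ 0)
    (heq : S₁ * PowerSeries.derivative K F₁ = F₁ * PowerSeries.derivative K S₁) :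
    PowerSeries.C (R := K) (PowerSeries.constantCoeff (R := K) S₁) * F₁
      = PowerSeries.C (R := K) (PowerSeries.constantCoeff (R := K) F₁) * S₁ := by
  have hι : Function.Injective (algebraMap K (FractionRing K)) :=
    IsFractionRing.injective K (FractionRing K)
  set M : PowerSeries K →+* PowerSeries (FractionRing K) :=
    PowerSeries.map (algebraMap K (FractionRing K)) with hM
  have hMinj : Function.Injective M := by
    intro f g h
    ext n i
    have hn : PowerSeries.coeff (R := K) n f = PowerSeries.coeff (R := K) n g := by
      apply hι
      rw [← coeff_map', ← coeff_map']
      exact congrArg (PowerSeries.coeff (R := (FractionRing K)) n) h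
    rw [hn]
  have hcc : ∀ f : PowerSeries K, PowerSeries.constantCoeff (R := (FractionRing K)) (M f)
      = algebraMap K (FractionRing K) (PowerSeries.constantCoeff (R := K) f) := by
    intro f
    rw [← PowerSeries.coeff_zero_eq_constantCoeff_apply,
      ← PowerSeries.coeff_zero_eq_constantCoeff_apply]
    exact coeff_map' f 0
  have hD : ∀ f : PowerSeries K, M (PowerSeries.derivative K f)
      = PowerSeries.derivative (FractionRing K) (M f) := by
    intro f
    ext n
    rw [PowerSeries.coeff_derivative, hM, coeff_map', PowerSeries.coeff_derivative,
      coeff_map', map_mul]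
    congr 1
    rw [map_add, map_natCast, map_one]
  haveI : CharZero (FractionRing K) := charZero_of_injective_algebraMap hι
  have hs₀F : PowerSeries.constantCoeff (R := (FractionRing K)) (M S₁) ≠ 0 := by
    rw [hcc]
    intro h
    exact hs₀ (hι (by rw [h, map_zero]))
  have heqF : M S₁ * PowerSeries.derivative (FractionRing K) (M F₁)
      = M F₁ * PowerSeries.derivative (FractionRing K) (M S₁) := by
    rw [← hD, ← hD, ← map_mul, ← map_mul, heq]
  obtain ⟨c, hc⟩ := prop_field (M S₁) (M F₁) hs₀F heqF
  have hcval : PowerSeries.constantCoeff (R := (FractionRing K)) (M F₁)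
      = c * PowerSeries.constantCoeff (R := (FractionRing K)) (M S₁) := by
    rw [hc, map_mul, PowerSeries.constantCoeff_C]
  have key : PowerSeries.C (R := (FractionRing K))
        (PowerSeries.constantCoeff (R := (FractionRing K)) (M S₁)) * M F₁
      = PowerSeries.C (R := (FractionRing K))
        (PowerSeries.constantCoeff (R := (FractionRing K)) (M F₁)) * M S₁ := by
    rw [hcval, hc, map_mul]
    ring
  apply hMinj
  rw [map_mul, map_mul, hM, PowerSeries.map_C, PowerSeries.map_C, ← hcc, ← hcc]
  exact key

end OneVar


def u0 (lam₂ μ : ℂ) (k : ℕ) : K :=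
  PowerSeries.C (R := ℂ) lam₂ * (1 + PowerSeries.C (R := ℂ) μ * PowerSeries.X ^ k)

lemma Φ_zD (lam₂ μ : ℂ) (k : ℕ) (f : R2) :
    Φ (zD lam₂ μ k f) = PowerSeries.C (R := K) (u0 lam₂ μ k) *
      (PowerSeries.X * PowerSeries.derivative K (Φ f)) := by
  simp only [zD, map_mul, map_add, map_one, map_pow, Φ_C, Φ_X0, Φ_X1, Φ_pd1]
  simp only [u0, map_mul, map_add, map_one, map_pow]
  ring

end Stmt14Aux

open Stmt14Aux

theorem stmt14 (lam₂ μ δ : ℂ) (k : ℕ) (hk : 1 ≤ k) (hlam₂ : lam₂ ≠ 0) (hδ : δ ≠ 0)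
    (A B s : R2) (hs : s ≠ 0) (hB : B ≠ 0)
    -- Z·B = δB (for B/s), denominators cleared :
    (heqB : s * zD lam₂ μ k B - B * zD lam₂ μ k s
      = MvPowerSeries.C (σ := Fin 2) (R := ℂ) δ * B * s)
    -- Z·A = δA + (kμx^{k−1}/(1+μx^k))·B (for A/s, B/s), denominators cleared :
    (heqA : (1 + MvPowerSeries.C (σ := Fin 2) (R := ℂ) μ * MvPowerSeries.X 0 ^ k) *
        (s * zD lam₂ μ k A - A * zD lam₂ μ k s)
      = MvPowerSeries.C (σ := Fin 2) (R := ℂ) δ *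
          (1 + MvPowerSeries.C (σ := Fin 2) (R := ℂ) μ * MvPowerSeries.X 0 ^ k) * A * s +
        MvPowerSeries.C (σ := Fin 2) (R := ℂ) ((k : ℂ) * μ) * MvPowerSeries.X 0 ^ (k - 1) * B * s) :
    μ = 0 ∧
    ∃ m : ℤ, δ = (m : ℂ) * lam₂ ∧
      ∃ a b t : R2, OnlyX a ∧ OnlyX b ∧ OnlyX t ∧ t ≠ 0 ∧ b ≠ 0 ∧
        -- B/s = (b/t)·y^m :
        t * B * MvPowerSeries.X 1 ^ (-m).toNat
          = s * b * MvPowerSeries.X 1 ^ m.toNat ∧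
        -- A/s = (a/t)·y^m :
        t * A * MvPowerSeries.X 1 ^ (-m).toNat
          = s * a * MvPowerSeries.X 1 ^ m.toNat := by
  classical
  have hk0 : k ≠ 0 := by omega
  have hSne : Φ s ≠ 0 := fun h => hs (Φ_inj (by rw [h, map_zero]))
  have hBne : Φ B ≠ 0 := fun h => hB (Φ_inj (by rw [h, map_zero]))
  obtain ⟨p, S₁, hs₀, hSfac⟩ := ordfact hSne
  obtain ⟨q, B₁, hb₀, hBfac⟩ := ordfact hBne
  have HB : PowerSeries.C (R := K) (u0 lam₂ μ k) *
      (Φ s * (PowerSeries.X * PowerSeries.derivative K (Φ B))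
        - Φ B * (PowerSeries.X * PowerSeries.derivative K (Φ s)))
      = PowerSeries.C (R := K) (PowerSeries.C (R := ℂ) δ) * Φ B * Φ s := by
    have h := congrArg Φ heqB
    rw [map_sub, map_mul, map_mul, map_mul, map_mul, Φ_zD, Φ_zD, Φ_C] at h
    linear_combination h
  rw [hSfac, hBfac] at HB
  obtain ⟨hqp, hEB⟩ := core _ _ p q S₁ B₁ hs₀ hb₀ HB
  have hcast : ((q:K) - (p:K)) = PowerSeries.C (R := ℂ) ((q:ℂ) - (p:ℂ)) := by
    rw [map_sub, map_natCast, map_natCast]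
  have hexp : PowerSeries.C (R := ℂ) (lam₂*((q:ℂ)-(p:ℂ)))
      + PowerSeries.C (R := ℂ) (lam₂*μ*((q:ℂ)-(p:ℂ))) * PowerSeries.X ^ k
      = PowerSeries.C (R := ℂ) δ := by
    rw [← hqp, hcast]
    simp only [u0, map_mul]
    ring
  have hδeq : lam₂ * ((q:ℂ)-(p:ℂ)) = δ := by
    have h0 := congrArg (PowerSeries.constantCoeff (R := ℂ)) hexp
    simpa [zero_pow hk0] using h0
  have hμ0 : lam₂*μ*((q:ℂ)-(p:ℂ)) = 0 := by
    have h1 := congrArg (PowerSeries.coeff (R := ℂ) k) hexp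
    rw [map_add, PowerSeries.coeff_C, if_neg hk0, PowerSeries.coeff_C_mul,
      PowerSeries.coeff_X_pow, if_pos rfl, mul_one, zero_add,
      PowerSeries.coeff_C, if_neg hk0] at h1
    exact h1
  have hqpne : ((q:ℂ)-(p:ℂ)) ≠ 0 := by
    intro h; rw [h, mul_zero] at hδeq; exact hδ hδeq.symm
  have hμ : μ = 0 := by
    rcases mul_eq_zero.mp hμ0 with h | h
    · rcases mul_eq_zero.mp h with h' | h'
      · exact absurd h' hlam₂
      · exact h'
    · exact absurd h hqpne
  subst hμ
  have hu0K : u0 lam₂ 0 k ≠ 0 := by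
    intro h
    apply hlam₂
    have h3 := congrArg (PowerSeries.constantCoeff (R := ℂ)) h
    simpa [u0, zero_pow hk0] using h3
  have huC : PowerSeries.C (R := K) (u0 lam₂ 0 k) ≠ 0 := by
    intro h
    apply hu0K
    have h2 := congrArg (PowerSeries.constantCoeff (R := K)) h
    simpa using h2
  have hEB' : S₁ * PowerSeries.derivative K B₁ = B₁ * PowerSeries.derivative K S₁ := by
    have h4 : S₁ * (PowerSeries.X * PowerSeries.derivative K B₁)
        - B₁ * (PowerSeries.X * PowerSeries.derivative K S₁) = 0 := by
      rcases mul_eq_zero.mp hEB with h | h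
      · exact absurd h huC
      · exact h
    have h5 : (PowerSeries.X : PowerSeries K) *
        (S₁ * PowerSeries.derivative K B₁ - B₁ * PowerSeries.derivative K S₁) = 0 := by
      linear_combination h4
    rcases mul_eq_zero.mp h5 with h | h
    · exact absurd h PowerSeries.X_ne_zero
    · linear_combination h
  have hBkey := prop S₁ B₁ hs₀ hEB'
  refine ⟨rfl, (q:ℤ) - (p:ℤ), by push_cast; linear_combination - hδeq, ?_⟩
  have hexp2 : q + (-((q:ℤ)-(p:ℤ))).toNat = p + ((q:ℤ)-(p:ℤ)).toNat := by omega
  have hBfinal : PowerSeries.C (R := K) (PowerSeries.constantCoeff (R := K) S₁) * Φ B *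
        PowerSeries.X ^ (-((q:ℤ)-(p:ℤ))).toNat
      = Φ s * PowerSeries.C (R := K) (PowerSeries.constantCoeff (R := K) B₁) *
        PowerSeries.X ^ ((q:ℤ)-(p:ℤ)).toNat := by
    rw [hBfac, hSfac]
    calc PowerSeries.C (R := K) (PowerSeries.constantCoeff (R := K) S₁) * (PowerSeries.X ^ q * B₁) *
          PowerSeries.X ^ (-((q:ℤ)-(p:ℤ))).toNat
        = PowerSeries.X ^ (q + (-((q:ℤ)-(p:ℤ))).toNat) *
          (PowerSeries.C (R := K) (PowerSeries.constantCoeff (R := K) S₁) * B₁) := by ring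
      _ = PowerSeries.X ^ (p + ((q:ℤ)-(p:ℤ)).toNat) *
          (PowerSeries.C (R := K) (PowerSeries.constantCoeff (R := K) B₁) * S₁) := by rw [hexp2, hBkey]
      _ = _ := by ring
  -- A part
  by_cases hA : A = 0
  · refine ⟨0, emb (PowerSeries.constantCoeff (R := K) B₁), emb (PowerSeries.constantCoeff (R := K) S₁),
      fun d hd => by simp, onlyX_emb _, onlyX_emb _, emb_ne_zero hs₀, emb_ne_zero hb₀, ?_, ?_⟩
    · apply Φ_inj
      rw [map_mul, map_mul, map_mul, map_mul, map_pow, map_pow, Φ_emb, Φ_emb, Φ_X1]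
      exact hBfinal
    · rw [hA]
      simp
  · have hAne : Φ A ≠ 0 := fun h => hA (Φ_inj (by rw [h, map_zero]))
    obtain ⟨qA, A₁, ha₀, hAfac⟩ := ordfact hAne
    have heqA' : s * zD lam₂ 0 k A - A * zD lam₂ 0 k s
        = MvPowerSeries.C (σ := Fin 2) (R := ℂ) δ * A * s := by
      have h := heqA
      simp only [mul_zero, map_zero, zero_mul, add_zero, zero_add, one_mul, mul_one] at h
      exact h
    have HA : PowerSeries.C (R := K) (u0 lam₂ 0 k) *
        (Φ s * (PowerSeries.X * PowerSeries.derivative K (Φ A))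
          - Φ A * (PowerSeries.X * PowerSeries.derivative K (Φ s)))
        = PowerSeries.C (R := K) (PowerSeries.C (R := ℂ) δ) * Φ A * Φ s := by
      have h := congrArg Φ heqA'
      rw [map_sub, map_mul, map_mul, map_mul, map_mul, Φ_zD, Φ_zD, Φ_C] at h
      linear_combination h
    rw [hSfac, hAfac] at HA
    obtain ⟨hqpA, hEA⟩ := core _ _ p qA S₁ A₁ hs₀ ha₀ HA
    have hq : qA = q := by
      have h1 : u0 lam₂ 0 k * ((qA:K)-(p:K)) = u0 lam₂ 0 k * ((q:K)-(p:K)) := by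
        rw [hqpA, hqp]
      have h2 := mul_left_cancel₀ hu0K h1
      have h3 : (qA:K) = (q:K) := by linear_combination h2
      exact_mod_cast h3
    rw [hq] at hAfac
    have hEA' : S₁ * PowerSeries.derivative K A₁ = A₁ * PowerSeries.derivative K S₁ := by
      have h4 : S₁ * (PowerSeries.X * PowerSeries.derivative K A₁)
          - A₁ * (PowerSeries.X * PowerSeries.derivative K S₁) = 0 := by
        rcases mul_eq_zero.mp hEA with h | h
        · exact absurd h huC
        · exact h
      have h5 : (PowerSeries.X : PowerSeries K) *
          (S₁ * PowerSeries.derivative K A₁ - A₁ * PowerSeries.derivative K S₁) = 0 := by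
        linear_combination h4
      rcases mul_eq_zero.mp h5 with h | h
      · exact absurd h PowerSeries.X_ne_zero
      · linear_combination h
    have hAkey := prop S₁ A₁ hs₀ hEA'
    have hAfinal : PowerSeries.C (R := K) (PowerSeries.constantCoeff (R := K) S₁) * Φ A *
          PowerSeries.X ^ (-((q:ℤ)-(p:ℤ))).toNat
        = Φ s * PowerSeries.C (R := K) (PowerSeries.constantCoeff (R := K) A₁) *
          PowerSeries.X ^ ((q:ℤ)-(p:ℤ)).toNat := by
      rw [hAfac, hSfac]
      calc PowerSeries.C (R := K) (PowerSeries.constantCoeff (R := K) S₁) * (PowerSeries.X ^ q * A₁) *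
            PowerSeries.X ^ (-((q:ℤ)-(p:ℤ))).toNat
          = PowerSeries.X ^ (q + (-((q:ℤ)-(p:ℤ))).toNat) *
            (PowerSeries.C (R := K) (PowerSeries.constantCoeff (R := K) S₁) * A₁) := by ring
        _ = PowerSeries.X ^ (p + ((q:ℤ)-(p:ℤ)).toNat) *
            (PowerSeries.C (R := K) (PowerSeries.constantCoeff (R := K) A₁) * S₁) := by rw [hexp2, hAkey]
        _ = _ := by ring
    refine ⟨emb (PowerSeries.constantCoeff (R := K) A₁), emb (PowerSeries.constantCoeff (R := K) B₁),
      emb (PowerSeries.constantCoeff (R := K) S₁),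
      onlyX_emb _, onlyX_emb _, onlyX_emb _, emb_ne_zero hs₀, emb_ne_zero hb₀, ?_, ?_⟩
    · apply Φ_inj
      rw [map_mul, map_mul, map_mul, map_mul, map_pow, map_pow, Φ_emb, Φ_emb, Φ_X1]
      exact hBfinal
    · apply Φ_inj
      rw [map_mul, map_mul, map_mul, map_mul, map_pow, map_pow, Φ_emb, Φ_emb, Φ_X1]
      exact hAfinal
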